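/- Let f : X → Y be a smooth map of quasi-étale diffeological spaces. Then for every x ∈ X there exists a local representation of f around x, i.e. quasi-étale charts π_X : M → X (with x in the image of π_X) and π_Y : N → Y from smooth manifolds, and a smooth map f̃ : M → N with π_Y ∘ f̃ = f ∘ π_X. -/

import Mathlib

open Set Function
open scoped Manifold

/-! ## Diffeological spaces -/

/-- A diffeology on a type `X`.  A plot is a map `(Fin n → ℝ) → X` together with an open
domain `U ⊆ ℝⁿ`; only the values on `U` matter. -/
structure Diffeology' (X : Type*) where
  IsPlot : {n : ℕ} → Set (Fin n → ℝ) → ((Fin n → ℝ) → X) → Prop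
  isOpen_of_isPlot : ∀ {n : ℕ} {U : Set (Fin n → ℝ)} {φ : (Fin n → ℝ) → X},
      IsPlot U φ → IsOpen U
  isPlot_const : ∀ {n : ℕ} {U : Set (Fin n → ℝ)}, IsOpen U → ∀ x : X,
      IsPlot U fun _ => x
  isPlot_congr : ∀ {n : ℕ} {U : Set (Fin n → ℝ)} {φ ψ : (Fin n → ℝ) → X},
      Set.EqOn φ ψ U → IsPlot U φ → IsPlot U ψ
  isPlot_comp : ∀ {n m : ℕ} {U : Set (Fin n → ℝ)} {φ : (Fin n → ℝ) → X}
      {V : Set (Fin m → ℝ)} {g : (Fin m → ℝ) → (Fin n → ℝ)},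
      IsPlot U φ → IsOpen V → ContDiffOn ℝ (⊤ : ℕ∞) g V → Set.MapsTo g V U →
      IsPlot V (φ ∘ g)
  isPlot_locality : ∀ {n : ℕ} {U : Set (Fin n → ℝ)} {φ : (Fin n → ℝ) → X}, IsOpen U →
      (∀ u ∈ U, ∃ V, V ⊆ U ∧ IsOpen V ∧ u ∈ V ∧ IsPlot V φ) → IsPlot U φ

namespace Diffeology'

variable {X Y : Type*}

/-- A subset is D-open if its preimage under every plot is open. -/
def dOpen (DX : Diffeology' X) (S : Set X) : Prop :=
  ∀ {n : ℕ} {U : Set (Fin n → ℝ)} {φ : (Fin n → ℝ) → X},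
    DX.IsPlot U φ → IsOpen (U ∩ φ ⁻¹' S)

/-- The product diffeology. -/
def prod (DX : Diffeology' X) (DY : Diffeology' Y) : Diffeology' (X × Y) where
  IsPlot U φ := DX.IsPlot U (fun u => (φ u).1) ∧ DY.IsPlot U (fun u => (φ u).2)
  isOpen_of_isPlot h := DX.isOpen_of_isPlot h.1
  isPlot_const hU x := ⟨DX.isPlot_const hU x.1, DY.isPlot_const hU x.2⟩
  isPlot_congr h hp :=
    ⟨DX.isPlot_congr (fun u hu => by rw [h hu]) hp.1,
     DY.isPlot_congr (fun u hu => by rw [h hu]) hp.2⟩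
  isPlot_comp h hV hg hmap :=
    ⟨DX.isPlot_comp h.1 hV hg hmap, DY.isPlot_comp h.2 hV hg hmap⟩
  isPlot_locality hU h :=
    ⟨DX.isPlot_locality hU fun u hu => by
        obtain ⟨V, h1, h2, h3, h4⟩ := h u hu; exact ⟨V, h1, h2, h3, h4.1⟩,
     DY.isPlot_locality hU fun u hu => by
        obtain ⟨V, h1, h2, h3, h4⟩ := h u hu; exact ⟨V, h1, h2, h3, h4.2⟩⟩

/-- The subset diffeology. -/
def subset (DX : Diffeology' X) (S : Set X) : Diffeology' S where
  IsPlot U φ := DX.IsPlot U fun u => (φ u : X)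
  isOpen_of_isPlot h := DX.isOpen_of_isPlot h
  isPlot_const hU x := DX.isPlot_const hU (x : X)
  isPlot_congr h hp := DX.isPlot_congr (fun u hu => congrArg Subtype.val (h hu)) hp
  isPlot_comp h hV hg hmap := DX.isPlot_comp h hV hg hmap
  isPlot_locality hU h := DX.isPlot_locality hU fun u hu => h u hu

end Diffeology'

variable {X Y Z : Type*}

/-- Smooth maps of diffeological spaces. -/
def DSmooth (DX : Diffeology' X) (DY : Diffeology' Y) (f : X → Y) : Prop :=
  ∀ {n : ℕ} {U : Set (Fin n → ℝ)} {φ : (Fin n → ℝ) → X},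
    DX.IsPlot U φ → DY.IsPlot U (f ∘ φ)

/-- Smoothness of a map on a subset (w.r.t. the subset diffeology). -/
def DSmoothOn (DX : Diffeology' X) (DY : Diffeology' Y) (f : X → Y) (O : Set X) : Prop :=
  ∀ {n : ℕ} {U : Set (Fin n → ℝ)} {φ : (Fin n → ℝ) → X},
    DX.IsPlot U φ → Set.MapsTo φ U O → DY.IsPlot U (f ∘ φ)

/-- Subductions: plots downstairs lift locally. -/
def IsSubduction (DX : Diffeology' X) (DY : Diffeology' Y) (f : X → Y) : Prop :=
  DSmooth DX DY f ∧
    ∀ {n : ℕ} {U : Set (Fin n → ℝ)} {φ : (Fin n → ℝ) → Y}, DY.IsPlot U φ → ∀ u ∈ U,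
      ∃ V, V ⊆ U ∧ IsOpen V ∧ u ∈ V ∧ ∃ ψ, DX.IsPlot V ψ ∧ Set.EqOn (f ∘ ψ) φ V

/-- Local subductions: plots lift locally through any prescribed point of the fiber. -/
def IsLocalSubduction (DX : Diffeology' X) (DY : Diffeology' Y) (f : X → Y) : Prop :=
  DSmooth DX DY f ∧
    ∀ {n : ℕ} {U : Set (Fin n → ℝ)} {φ : (Fin n → ℝ) → Y}, DY.IsPlot U φ →
      ∀ u ∈ U, ∀ x : X, f x = φ u →
      ∃ V, V ⊆ U ∧ IsOpen V ∧ u ∈ V ∧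
        ∃ ψ, DX.IsPlot V ψ ∧ ψ u = x ∧ Set.EqOn (f ∘ ψ) φ V

/-- `DY` is the quotient diffeology of `DX` along `π`: plots are exactly the maps that
locally lift to plots of `X`. -/
def IsQuotientDiffeology (DX : Diffeology' X) (π : X → Y) (DY : Diffeology' Y) : Prop :=
  ∀ {n : ℕ} (U : Set (Fin n → ℝ)) (φ : (Fin n → ℝ) → Y),
    DY.IsPlot U φ ↔ (IsOpen U ∧ ∀ u ∈ U, ∃ V, V ⊆ U ∧ IsOpen V ∧ u ∈ V ∧
      ∃ ψ, DX.IsPlot V ψ ∧ Set.EqOn (π ∘ ψ) φ V)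

/-- A subset is totally disconnected if every plot taking values in it is locally constant. -/
def TotallyDisconnectedIn (DX : Diffeology' X) (S : Set X) : Prop :=
  ∀ {n : ℕ} {U : Set (Fin n → ℝ)} {φ : (Fin n → ℝ) → X},
    DX.IsPlot U φ → Set.MapsTo φ U S → ∀ u ∈ U,
      ∃ V, V ⊆ U ∧ IsOpen V ∧ u ∈ V ∧ ∀ v ∈ V, φ v = φ u

/-- `f` is a local diffeomorphism on the D-open set `O`. -/
def IsLocalDiffeoOn (DX : Diffeology' X) (f : X → X) (O : Set X) : Prop :=
  ∀ x ∈ O, ∃ V, V ⊆ O ∧ DX.dOpen V ∧ x ∈ V ∧ DX.dOpen (f '' V) ∧ Set.InjOn f V ∧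
    ∃ g : X → X, DSmoothOn DX DX g (f '' V) ∧ ∀ v ∈ V, g (f v) = v

/-- Quasi-étale maps of diffeological spaces: (QE1) a local subduction, (QE2) with totally
disconnected fibers, such that (QE3) every smooth map over the base defined on a D-open set
is a local diffeomorphism. -/
def IsQuasiEtale (DX : Diffeology' X) (DY : Diffeology' Y) (π : X → Y) : Prop :=
  IsLocalSubduction DX DY π ∧
  (∀ y : Y, TotallyDisconnectedIn DX (π ⁻¹' {y})) ∧
  ∀ (O : Set X) (f : X → X), DX.dOpen O → DSmoothOn DX DX f O →
    (∀ x ∈ O, π (f x) = π x) → IsLocalDiffeoOn DX f O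

/-! ## Manifolds as diffeological spaces -/

/-- `DM` is the manifold diffeology of the manifold `M`: plots are the smooth maps from
open subsets of Euclidean spaces. -/
def IsManifoldDiffeology {E H : Type*} [NormedAddCommGroup E] [NormedSpace ℝ E]
    [TopologicalSpace H] (I : ModelWithCorners ℝ E H) {M : Type*} [TopologicalSpace M]
    [ChartedSpace H M] (DM : Diffeology' M) : Prop :=
  ∀ {n : ℕ} (U : Set (Fin n → ℝ)) (φ : (Fin n → ℝ) → M),
    DM.IsPlot U φ ↔ (IsOpen U ∧ ContMDiffOn 𝓘(ℝ, Fin n → ℝ) I (⊤ : ℕ∞) φ U)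

/-- A witness that the diffeological space `(M, DM)` is a smooth (finite-dimensional,
Hausdorff, second countable) manifold with its manifold diffeology. -/
structure ManifoldDiffeologyWitness (M : Type*) (DM : Diffeology' M) where
  d : ℕ
  [tM : TopologicalSpace M]
  [cM : ChartedSpace (EuclideanSpace ℝ (Fin d)) M]
  smooth : IsManifold (𝓡 d) ((⊤ : ℕ∞) : WithTop ℕ∞) M
  t2 : T2Space M
  sc : SecondCountableTopology M
  isDiffeology : IsManifoldDiffeology (𝓡 d) DM

/-- The diffeological space `(M, DM)` is a smooth manifold. -/
def IsSmoothManifoldDiffeology {M : Type*} (DM : Diffeology' M) : Prop :=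
  Nonempty (ManifoldDiffeologyWitness M DM)

/-- A quasi-étale diffeological space: every point lies in the image of a quasi-étale
chart, i.e. a quasi-étale map from a smooth manifold. -/
def IsQuasiEtaleSpace {X : Type*} (DX : Diffeology' X) : Prop :=
  ∀ x : X, ∃ (M : Type) (DM : Diffeology' M) (π : M → X),
    IsSmoothManifoldDiffeology DM ∧ IsQuasiEtale DM DX π ∧ x ∈ Set.range π

/-! ## Fiber products and cartesian morphisms in QUED -/

/-- The diffeological fiber product `X ×_Z Y` of `p : X → Z` and `f : Y → Z`. -/
def fiberProductDiffeology (DX : Diffeology' X) (DY : Diffeology' Y) (p : X → Z)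
    (f : Y → Z) : Diffeology' {w : X × Y // p w.1 = f w.2} :=
  (DX.prod DY).subset {w | p w.1 = f w.2}

/-- `p : X → Z` is cartesian in the category QUED of quasi-étale diffeological spaces:
for every QUED morphism `f : Y → Z` the diffeological fiber product is again a
quasi-étale diffeological space (so it provides the fiber product in QUED; when it is
empty there is no commutative square over `p` and `f` in QUED). -/
def IsCartesianQUED (DX : Diffeology' X) {Z : Type*} (DZ : Diffeology' Z) (p : X → Z) : Prop :=
  ∀ (Y : Type) (DY : Diffeology' Y), IsQuasiEtaleSpace DY → ∀ f : Y → Z, DSmooth DY DZ f →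
    IsQuasiEtaleSpace (fiberProductDiffeology DX DY p f)


/-! ## Auxiliary lemmas -/

section Aux

open TopologicalSpace

lemma Diffeology'.isPlot_mono {M : Type*} (DM : Diffeology' M) {n : ℕ}
    {U V : Set (Fin n → ℝ)} {φ : (Fin n → ℝ) → M}
    (h : DM.IsPlot U φ) (hV : IsOpen V) (hVU : V ⊆ U) : DM.IsPlot V φ := by
  have := DM.isPlot_comp h hV contDiffOn_id (fun x hx => hVU hx)
  exact DM.isPlot_congr (fun u _ => rfl) this

theorem contMDiffOn_opens_iff {d n : ℕ} {M : Type*} [TopologicalSpace M]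
    [ChartedSpace (EuclideanSpace ℝ (Fin d)) M] [IsManifold (𝓡 d) ((⊤ : ℕ∞) : WithTop ℕ∞) M]
    {s : Opens M} {U : Set (Fin n → ℝ)} {φ : (Fin n → ℝ) → s} :
    ContMDiffOn 𝓘(ℝ, Fin n → ℝ) (𝓡 d) (⊤ : ℕ∞) φ U ↔
    ContMDiffOn 𝓘(ℝ, Fin n → ℝ) (𝓡 d) (⊤ : ℕ∞) (fun u => (φ u : M)) U := by
  constructor
  · intro h
    exact (contMDiff_subtype_val (U := s)).comp_contMDiffOn h
  · intro h v hv
    have h1 := h v hv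
    rw [contMDiffWithinAt_iff] at h1 ⊢
    exact ⟨(Topology.IsInducing.subtypeVal.continuousWithinAt_iff).mpr h1.1,
      by convert h1.2 using 2; rfl⟩

variable {d : ℕ} {M : Type*} [TopologicalSpace M]
    [ChartedSpace (EuclideanSpace ℝ (Fin d)) M] [IsManifold (𝓡 d) ((⊤ : ℕ∞) : WithTop ℕ∞) M]
    {DM : Diffeology' M}

omit [IsManifold (𝓡 d) ((⊤ : ℕ∞) : WithTop ℕ∞) M] in
lemma dOpen_of_isOpen (hD : IsManifoldDiffeology (𝓡 d) DM) {s : Set M} (hs : IsOpen s) :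
    DM.dOpen s := by
  intro n U φ h
  exact ((hD U φ).1 h).2.continuousOn.isOpen_inter_preimage ((hD U φ).1 h).1 hs

lemma isManifoldDiffeology_subset (hD : IsManifoldDiffeology (𝓡 d) DM) (s : Opens M) :
    IsManifoldDiffeology (𝓡 d) (show Diffeology' s from DM.subset (s : Set M)) := by
  intro n U φ
  rw [show (show Diffeology' s from DM.subset (s : Set M)).IsPlot U φ =
      DM.IsPlot U (fun u => (φ u : M)) from rfl, hD]
  exact and_congr_right fun _ => contMDiffOn_opens_iff.symm

/-- Restriction of a quasi-étale map to a D-open subset is quasi-étale. -/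
theorem isQuasiEtale_subset {M X : Type*} {DM : Diffeology' M} {DX : Diffeology' X} {π : M → X}
    (hQE : IsQuasiEtale DM DX π) (s : Set M) (hsD : DM.dOpen s) :
    IsQuasiEtale (DM.subset s) DX (fun m : s => π m.val) := by
  obtain ⟨⟨hsmooth, hlift⟩, hfib, hqe3⟩ := hQE
  classical
  refine ⟨⟨?_, ?_⟩, ?_, ?_⟩
  · -- DSmooth
    intro n U φ h
    exact DX.isPlot_congr (fun u _ => rfl) (hsmooth h)
  · -- local subduction lifting
    intro n U φ hφ u hu x hx
    obtain ⟨V, hVU, hVopen, huV, ψ, hψ, hψu, heq⟩ := hlift hφ u hu x.val hx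
    have hW : IsOpen (V ∩ ψ ⁻¹' s) := hsD hψ
    have hus : ψ u ∈ s := by rw [hψu]; exact x.2
    refine ⟨V ∩ ψ ⁻¹' s, fun v hv => hVU hv.1, hW, ⟨huV, hus⟩,
      fun v => if h : ψ v ∈ s then ⟨ψ v, h⟩ else x, ?_, ?_, ?_⟩
    · refine DM.isPlot_congr (fun v hv => ?_)
        (DM.isPlot_mono hψ hW inter_subset_left)
      have hvs : ψ v ∈ s := hv.2
      simp only [dif_pos hvs]
    · simp only [dif_pos hus]; exact Subtype.ext hψu
    · intro v hv
      have hvs : ψ v ∈ s := hv.2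
      show π (↑(if h : ψ v ∈ s then (⟨ψ v, h⟩ : s) else x)) = φ v
      rw [dif_pos hvs]
      exact heq hv.1
  · -- fibers totally disconnected
    intro y n U φ h hmap u hu
    obtain ⟨V, h1, h2, h3, h4⟩ := hfib y h (fun v hv => hmap hv) u hu
    exact ⟨V, h1, h2, h3, fun v hv => Subtype.ext (h4 v hv)⟩
  · -- (QE3)
    intro O F hO hF hcomm
    rcases isEmpty_or_nonempty s with he | hne
    · exact fun a _ => isEmptyElim a
    obtain ⟨m0⟩ := hne
    -- the extension of `F` to `M`
    set Fext : M → M := fun m => if h : m ∈ s then (F ⟨m, h⟩).val else m with hFext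
    have hres : ∀ (a : s), Fext a.val = (F a).val := by
      rintro ⟨a, ha⟩; exact dif_pos ha
    -- `val '' O` is D-open
    have hval : ∀ {A : Set s} {v : M}, v ∈ Subtype.val '' A ↔ ∃ h : v ∈ s, (⟨v, h⟩ : s) ∈ A := by
      intro A v
      constructor
      · rintro ⟨a, ha, rfl⟩; exact ⟨a.2, by simpa using ha⟩
      · rintro ⟨h, hA⟩; exact ⟨⟨v, h⟩, hA, rfl⟩
    have hOD : DM.dOpen (Subtype.val '' O) := by
      intro n U φ h
      have hW : IsOpen (U ∩ φ ⁻¹' s) := hsD h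
      set φ' : (Fin n → ℝ) → s := fun v => if h : φ v ∈ s then ⟨φ v, h⟩ else m0 with hφ'
      have hplot : (DM.subset s).IsPlot (U ∩ φ ⁻¹' s) φ' :=
        DM.isPlot_congr (fun v hv => by
          have hvs : φ v ∈ s := hv.2
          simp only [hφ', dif_pos hvs])
          (DM.isPlot_mono h hW inter_subset_left)
      have hopen := hO hplot
      have hset : U ∩ φ ⁻¹' (Subtype.val '' O) = (U ∩ φ ⁻¹' s) ∩ φ' ⁻¹' O := by
        ext v
        constructor
        · rintro ⟨hvU, hvO⟩
          obtain ⟨hs', hA⟩ := hval.1 hvO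
          exact ⟨⟨hvU, hs'⟩, by simp only [mem_preimage, hφ', dif_pos hs']; exact hA⟩
        · rintro ⟨⟨hvU, hvs⟩, hvO⟩
          have hvs' : φ v ∈ s := hvs
          refine ⟨hvU, hval.2 ⟨hvs', ?_⟩⟩
          simpa only [mem_preimage, hφ', dif_pos hvs'] using hvO
      rw [hset]; exact hopen
    -- `Fext` is smooth on `val '' O`
    have hFs : DSmoothOn DM DM Fext (Subtype.val '' O) := by
      intro n U φ h hmap
      set φ' : (Fin n → ℝ) → s := fun v => if h : φ v ∈ s then ⟨φ v, h⟩ else m0 with hφ'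
      have hsub : ∀ v ∈ U, φ v ∈ s := fun v hv => (hval.1 (hmap hv)).1
      have hplot : (DM.subset s).IsPlot U φ' :=
        DM.isPlot_congr (fun v hv => by simp [hφ', hsub v hv]) h
      have hmap' : Set.MapsTo φ' U O := by
        intro v hv
        obtain ⟨hs', hA⟩ := hval.1 (hmap hv)
        simpa [hφ', hs'] using hA
      have := hF hplot hmap'
      refine DM.isPlot_congr (fun v hv => ?_) this
      have hs' := hsub v hv
      simp [comp_apply, hφ', hFext, hs']
    have hcomm' : ∀ m ∈ Subtype.val '' O, π (Fext m) = π m := by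
      rintro m ⟨a, ha, rfl⟩
      rw [hres a]
      exact hcomm a ha
    have hld := hqe3 (Subtype.val '' O) Fext hOD hFs hcomm'
    -- transfer the local diffeo structure back to `s`
    intro a ha
    obtain ⟨V, hVsub, hVD, haV, hVFD, hinj, g, hg, hginv⟩ := hld a.val ⟨a, ha, rfl⟩
    set V' : Set s := Subtype.val ⁻¹' V with hV'
    have hV'O : V' ⊆ O := by
      intro b hb
      obtain ⟨c, hc, hcb⟩ := hVsub hb
      rwa [show c = b from Subtype.ext hcb] at hc
    have hvalV : Subtype.val '' V' = V := by
      apply Subset.antisymm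
      · rintro v ⟨b, hb, rfl⟩; exact hb
      · intro v hv
        obtain ⟨c, _, rfl⟩ := hVsub hv
        exact ⟨c, hv, rfl⟩
    have hvalFV : Subtype.val '' (F '' V') = Fext '' V := by
      rw [← hvalV, Set.image_image, Set.image_image]
      exact Set.image_congr fun b _ => (hres b).symm
    refine ⟨V', hV'O, ?_, haV, ?_, ?_, ?_⟩
    · -- V' is D-open
      intro n U φ h
      exact hVD h
    · -- F '' V' is D-open
      intro n U φ h
      have := hVFD h
      have hset : U ∩ φ ⁻¹' (F '' V') = U ∩ (fun u => (φ u).val) ⁻¹' (Fext '' V) := by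
        ext v
        simp only [mem_inter_iff, mem_preimage, and_congr_right_iff]
        intro _
        rw [← hvalFV]
        exact ⟨fun hm => ⟨φ v, hm, rfl⟩, fun ⟨c, hc, hcv⟩ => by
          rwa [show c = φ v from Subtype.ext hcv] at hc⟩
      rw [hset]; exact this
    · -- injectivity
      intro b hb c hc hbc
      have heq : Fext b.val = Fext c.val := by rw [hres b, hres c, hbc]
      exact Subtype.ext (hinj hb hc heq)
    · -- local inverse
      have hgs : ∀ b : s, b ∈ F '' V' → g b.val ∈ s := by
        rintro b ⟨c, hc, rfl⟩
        rw [← hres c, hginv c.val hc]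
        exact c.2
      refine ⟨fun b => if h : g b.val ∈ s then ⟨g b.val, h⟩ else b, ?_, ?_⟩
      · intro n U φ h hmap
        have hmapv : Set.MapsTo (fun u => (φ u).val) U (Fext '' V) := by
          intro v hv
          rw [← hvalFV]
          exact ⟨φ v, hmap hv, rfl⟩
        have hgplot := hg h hmapv
        exact DM.isPlot_congr (fun v hv => by simp [dif_pos (hgs _ (hmap hv))]) hgplot
      · intro b hb
        have h1 : g (F b).val = b.val := by rw [← hres b]; exact hginv b.val hb
        have h2 : g (F b).val ∈ s := h1 ▸ b.2
        simp only [dif_pos h2]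
        exact Subtype.ext h1

end Aux

section Main

open TopologicalSpace

theorem statement6_aux {X Y M N : Type} {dM dN : ℕ}
    [TopologicalSpace M] [ChartedSpace (EuclideanSpace ℝ (Fin dM)) M]
    [IsManifold (𝓡 dM) ((⊤ : ℕ∞) : WithTop ℕ∞) M] [T2Space M] [SecondCountableTopology M]
    [TopologicalSpace N] [ChartedSpace (EuclideanSpace ℝ (Fin dN)) N]
    [IsManifold (𝓡 dN) ((⊤ : ℕ∞) : WithTop ℕ∞) N] [T2Space N] [SecondCountableTopology N]
    (DX : Diffeology' X) (DY : Diffeology' Y) {DM : Diffeology' M} {DN : Diffeology' N}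
    (hDM : IsManifoldDiffeology (𝓡 dM) DM) (hDN : IsManifoldDiffeology (𝓡 dN) DN)
    (πX : M → X) (πY : N → Y) (hQEX : IsQuasiEtale DM DX πX) (hQEY : IsQuasiEtale DN DY πY)
    (f : X → Y) (hf : DSmooth DX DY f) (x : X) (m : M) (hm : πX m = x)
    (n0 : N) (hn0 : πY n0 = f x) :
    ∃ (M' N' : Type) (DM' : Diffeology' M') (DN' : Diffeology' N')
      (πX' : M' → X) (πY' : N' → Y),
      IsSmoothManifoldDiffeology DM' ∧ IsQuasiEtale DM' DX πX' ∧
      IsSmoothManifoldDiffeology DN' ∧ IsQuasiEtale DN' DY πY' ∧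
      x ∈ Set.range πX' ∧
      ∃ ft : M' → N', DSmooth DM' DN' ft ∧ πY' ∘ ft = f ∘ πX' := by
  set e := EuclideanSpace.equiv (Fin dM) ℝ with he
  set c := extChartAt (𝓡 dM) m with hc
  set j : (Fin dM → ℝ) → EuclideanSpace ℝ (Fin dM) :=
    (e.symm : (Fin dM → ℝ) → EuclideanSpace ℝ (Fin dM)) with hj
  set U0 : Set (Fin dM → ℝ) := j ⁻¹' c.target with hU0
  have hU0open : IsOpen U0 := (isOpen_extChartAt_target m).preimage e.symm.continuous
  have hjsmooth : ContMDiff 𝓘(ℝ, Fin dM → ℝ) (𝓡 dM) (⊤ : ℕ∞) j := e.symm.contDiff.contMDiff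
  have hφ0 : DM.IsPlot U0 (fun u => c.symm (j u)) := by
    rw [hDM]
    refine ⟨hU0open, ?_⟩
    have h1 : ContMDiffOn 𝓘(ℝ, EuclideanSpace ℝ (Fin dM)) (𝓡 dM) (⊤ : ℕ∞) c.symm c.target :=
      contMDiffOn_extChartAt_symm m
    exact h1.comp hjsmooth.contMDiffOn (fun u hu => hu)
  set u0 := e (c m) with hu0def
  have hju0 : j u0 = c m := e.symm_apply_apply (c m)
  have hu0 : u0 ∈ U0 := by
    show j u0 ∈ c.target
    rw [hju0]; exact mem_extChartAt_target m
  have hplotY : DY.IsPlot U0 (fun u => f (πX (c.symm (j u)))) :=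
    DY.isPlot_congr (fun _ _ => rfl) (hf (hQEX.1.1 hφ0))
  have hn0' : πY n0 = f (πX (c.symm (j u0))) := by
    rw [hju0, extChartAt_to_inv m, hm, hn0]
  obtain ⟨V, hVU0, hVopen, hu0V, ψ, hψ, hψu0, heqψ⟩ := hQEY.1.2 hplotY u0 hu0 n0 hn0'
  set s' : Set M := c.source ∩ c ⁻¹' (j '' V) with hs'
  have hs'open : IsOpen s' :=
    (continuousOn_extChartAt m).isOpen_inter_preimage (isOpen_extChartAt_source m)
      (e.symm.toHomeomorph.isOpenMap V hVopen)
  have hm' : m ∈ s' := ⟨mem_extChartAt_source m, ⟨u0, hu0V, hju0⟩⟩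
  set O : Opens M := ⟨s', hs'open⟩ with hO
  have hkey : ∀ p : O, e (c p.val) ∈ V ∧ c.symm (j (e (c p.val))) = p.val := by
    rintro ⟨p, hp1, hp2⟩
    obtain ⟨v, hv, hjv⟩ := hp2
    have h1 : e (c p) = v := by rw [← hjv]; exact e.apply_symm_apply v
    refine ⟨h1 ▸ hv, ?_⟩
    have h2 : j (e (c p)) = c p := e.symm_apply_apply (c p)
    rw [h2]
    exact c.left_inv hp1
  refine ⟨O, N, (show Diffeology' O from DM.subset (O : Set M)), DN,
    (fun p => πX p.val), πY,
    ⟨@ManifoldDiffeologyWitness.mk _ _ dM inferInstance inferInstance inferInstance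
      inferInstance inferInstance (isManifoldDiffeology_subset hDM O)⟩,
    isQuasiEtale_subset hQEX s' (dOpen_of_isOpen hDM hs'open),
    ⟨@ManifoldDiffeologyWitness.mk _ _ dN inferInstance inferInstance inferInstance
      inferInstance inferInstance hDN⟩,
    hQEY, ⟨⟨m, hm'⟩, hm⟩,
    (fun p => ψ (e (c p.val))), ?_, ?_⟩
  · -- smoothness of the lift
    intro k W θ hθ
    have hθ' : DM.IsPlot W (fun w => (θ w).val) := hθ
    have hWopen : IsOpen W := ((hDM W _).1 hθ').1
    set g : (Fin k → ℝ) → (Fin dM → ℝ) := fun w => e (c (θ w).val) with hg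
    have hmaps : Set.MapsTo g W V := fun w _ => (hkey (θ w)).1
    have hψs : ContMDiffOn 𝓘(ℝ, Fin dM → ℝ) (𝓡 dN) (⊤ : ℕ∞) ψ V := ((hDN V ψ).1 hψ).2
    have hgsmooth : ContMDiffOn 𝓘(ℝ, Fin k → ℝ) 𝓘(ℝ, Fin dM → ℝ) (⊤ : ℕ∞) g W := by
      have h1 : ContMDiffOn 𝓘(ℝ, Fin k → ℝ) (𝓡 dM) (⊤ : ℕ∞) (fun w => (θ w).val) W :=
        ((hDM W _).1 hθ').2
      have h2 : ContMDiffOn (𝓡 dM) 𝓘(ℝ, EuclideanSpace ℝ (Fin dM)) (⊤ : ℕ∞) c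
          (chartAt (EuclideanSpace ℝ (Fin dM)) m).source := contMDiffOn_extChartAt
      have h3 : ContMDiffOn 𝓘(ℝ, Fin k → ℝ) 𝓘(ℝ, EuclideanSpace ℝ (Fin dM)) (⊤ : ℕ∞)
          (fun w => c (θ w).val) W := by
        refine h2.comp h1 (fun w hw => ?_)
        have h5 := (θ w).2.1
        rwa [← extChartAt_source (𝓡 dM)]
      exact (e.contDiff.contMDiff).comp_contMDiffOn h3
    have hcomp := hψs.comp hgsmooth hmaps
    rw [hDN]
    exact ⟨hWopen, hcomp⟩
  · -- commutation
    funext p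
    have h1 := (hkey p).1
    have h2 := (hkey p).2
    have h3 := heqψ h1
    show πY (ψ (e (c p.val))) = f (πX p.val)
    calc πY (ψ (e (c p.val))) = f (πX (c.symm (j (e (c p.val))))) := h3
    _ = f (πX p.val) := by rw [h2]

end Main

/-- Every smooth map between quasi-étale diffeological spaces admits a
local representation around every point. -/
theorem statement6 {X Y : Type} (DX : Diffeology' X) (DY : Diffeology' Y)
    (hX : IsQuasiEtaleSpace DX) (hY : IsQuasiEtaleSpace DY)
    (f : X → Y) (hf : DSmooth DX DY f) :
    ∀ x : X, ∃ (M N : Type) (DM : Diffeology' M) (DN : Diffeology' N)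
      (πX : M → X) (πY : N → Y),
      IsSmoothManifoldDiffeology DM ∧ IsQuasiEtale DM DX πX ∧
      IsSmoothManifoldDiffeology DN ∧ IsQuasiEtale DN DY πY ∧
      x ∈ Set.range πX ∧
      ∃ ft : M → N, DSmooth DM DN ft ∧ πY ∘ ft = f ∘ πX := by
  intro x
  obtain ⟨M, DM, πX, hMan, hQEX, m, hm⟩ := hX x
  obtain ⟨N, DN, πY, hManN, hQEY, n0, hn0⟩ := hY (f x)
  obtain ⟨w⟩ := hMan
  obtain ⟨wN⟩ := hManN
  letI := w.tM; letI := w.cM; haveI := w.smooth; haveI := w.t2; haveI := w.sc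
  letI := wN.tM; letI := wN.cM; haveI := wN.smooth; haveI := wN.t2; haveI := wN.sc
  exact statement6_aux DX DY w.isDiffeology wN.isDiffeology πX πY hQEX hQEY f hf x m hm n0 hn0
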